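/- arXiv:2010.00443 — 5 statements merged into one kernel-verified Lean document; each statement's English description precedes it below -/
import Mathlib

section
/- Let (L, ·, [·,·]) be a transposed Poisson structure and let p ∈ L. Define the mutation product x ·_p y = x · p · y. Then ·_p is commutative and associative and satisfies 2 z ·_p [x,y] = [z ·_p x, y] + [x, z ·_p y] for all x, y, z ∈ L; that is, (L, ·_p, [·,·]) is again a transposed Poisson structure. -/
/-- The mutation `x ·_p y = x · p · y` of a transposed Poisson
structure is again commutative, associative and satisfies the transposed
Leibniz rule with the same Lie bracket. -/
theorem mutation_transposedPoisson
    {L : Type*} [LieRing L] [LieAlgebra ℂ L]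
    (m : L →ₗ[ℂ] L →ₗ[ℂ] L)
    (hcomm : ∀ x y : L, m x y = m y x)
    (hassoc : ∀ x y z : L, m (m x y) z = m x (m y z))
    (hcompat : ∀ x y z : L, (2 : ℂ) • m z ⁅x, y⁆ = ⁅m z x, y⁆ + ⁅x, m z y⁆)
    (p : L) :
    (∀ x y : L, m x (m p y) = m y (m p x)) ∧
    (∀ x y z : L, m (m x (m p y)) (m p z) = m x (m p (m y (m p z)))) ∧
    (∀ x y z : L, (2 : ℂ) • m z (m p ⁅x, y⁆) =
        ⁅m z (m p x), y⁆ + ⁅x, m z (m p y)⁆) := by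
  refine ⟨?_, ?_, ?_⟩
  · intro x y
    calc m x (m p y) = m (m x p) y := (hassoc x p y).symm
      _ = m (m p x) y := by rw [hcomm x p]
      _ = m p (m x y) := hassoc p x y
      _ = m p (m y x) := by rw [hcomm x y]
      _ = m (m p y) x := (hassoc p y x).symm
      _ = m (m y p) x := by rw [hcomm p y]
      _ = m y (m p x) := hassoc y p x
  · intro x y z
    rw [hassoc x (m p y) (m p z), ← hassoc p y (m p z)]
  · intro x y z
    have h : m z (m p ⁅x, y⁆) = m (m z p) ⁅x, y⁆ := (hassoc z p _).symm
    have h1 : m z (m p x) = m (m z p) x := (hassoc z p x).symm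
    have h2 : m z (m p y) = m (m z p) y := (hassoc z p y).symm
    rw [h, h1, h2]
    exact hcompat x y (m z p)
end

section
/- A linear map φ : W → W is a 1/2-derivation of the Witt algebra W if and only if there exists a finitely supported family (α_j)_{j ∈ ℤ} of complex numbers such that φ(e_i) = Σ_{j ∈ ℤ} α_j e_{i+j} for every i ∈ ℤ. -/
/-- The Witt algebra bracket on the space `ℤ →₀ ℂ` with basis `e i = single i 1`,
given by `[e i, e j] = (i - j) e (i+j)`. -/
noncomputable def wittBracket (f g : ℤ →₀ ℂ) : ℤ →₀ ℂ :=
  f.sum fun i a => g.sum fun j b =>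
    (a * b * ((i : ℂ) - (j : ℂ))) • Finsupp.single (i + j) (1 : ℂ)

/-- The basis element `e i` of the Witt algebra. -/
noncomputable def we (i : ℤ) : ℤ →₀ ℂ := Finsupp.single i 1

/-!
Identify `e i` with `t ^ i ∈ ℂ[t, t⁻¹]`. Multiplication by a Laurent polynomial `α` is a
1/2-derivation because `[e (i + k), e j] + [e i, e (j + k)] = 2 (i - j) e (i + j + k)`.
Conversely, for a 1/2-derivation `φ`, the difference `ψ = φ - α ·` with `α = φ (e 0)` is again
one and kills `e 0`. The identity on `(e 0, e j)` says that `ψ (e j)` lies in the eigenspace of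
`ad (e 0)` for the eigenvalue `-2j`, i.e. `ψ (e j) ∈ ℂ e (2j)`; the identity on `(e i, e j)` with
`i, j ≠ 0`, `i ≠ j` then shows that this last coefficient of `ψ (e (i + j))` vanishes too.
-/

namespace Finsupp

theorem sum_single_add_apply {G M N : Type*} [AddGroup G] [Zero M] [AddCommMonoid N]
    (f : G →₀ M) (F : G → M → N) (hF : ∀ i, F i 0 = 0) (j m : G) :
    (f.sum fun i a => single (i + j) (F i a)) m = F (m - j) (f (m - j)) := by
  rw [sum_apply, sum_eq_single (m - j)]
  · simp
  · intro i _ hi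
    exact single_eq_of_ne (by rintro rfl; simp at hi)
  · simp [hF]

end Finsupp

namespace Witt

open Finsupp

noncomputable def wittBracketₗ : (ℤ →₀ ℂ) →ₗ[ℂ] (ℤ →₀ ℂ) →ₗ[ℂ] (ℤ →₀ ℂ) :=
  linearCombination ℂ fun i => linearCombination ℂ fun j => ((i : ℂ) - j) • we (i + j)

theorem wittBracket_eq_wittBracketₗ (f g : ℤ →₀ ℂ) : wittBracket f g = wittBracketₗ f g := by
  rw [wittBracketₗ, linearCombination_apply, LinearMap.finsupp_sum_apply, wittBracket]
  refine sum_congr fun i _ => ?_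
  rw [LinearMap.smul_apply, linearCombination_apply, smul_sum]
  refine sum_congr fun j _ => ?_
  rw [smul_smul, smul_smul, we]

theorem wittBracket_we_right (f : ℤ →₀ ℂ) (j : ℤ) :
    wittBracket f (we j) = f.sum fun i a => single (i + j) (a * ((i : ℂ) - j)) := by
  refine sum_congr fun i _ => ?_
  rw [we, sum_single_index (by simp), smul_single, smul_eq_mul, mul_one, mul_one]

theorem wittBracket_we_left (g : ℤ →₀ ℂ) (i : ℤ) :
    wittBracket (we i) g = g.sum fun j b => single (j + i) (b * ((i : ℂ) - j)) := by
  rw [wittBracket, we, sum_single_index (by simp)]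
  refine sum_congr fun j _ => ?_
  rw [smul_single, smul_eq_mul, mul_one, one_mul, add_comm]

theorem wittBracket_we_we (i j : ℤ) :
    wittBracket (we i) (we j) = ((i : ℂ) - j) • we (i + j) := by
  rw [wittBracket_we_left, we, sum_single_index (by simp), we, smul_single, smul_eq_mul,
    mul_one, one_mul, add_comm]

theorem wittBracket_we_right_apply (f : ℤ →₀ ℂ) (j m : ℤ) :
    wittBracket f (we j) m = f (m - j) * ((m : ℂ) - 2 * j) := by
  rw [wittBracket_we_right, sum_single_add_apply _ _ (by simp)]
  push_cast
  ring

theorem wittBracket_we_left_apply (g : ℤ →₀ ℂ) (i m : ℤ) :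
    wittBracket (we i) g m = g (m - i) * (2 * (i : ℂ) - m) := by
  rw [wittBracket_we_left, sum_single_add_apply _ _ (by simp)]
  push_cast
  ring

def IsHalfDerivation (φ : (ℤ →₀ ℂ) →ₗ[ℂ] (ℤ →₀ ℂ)) : Prop :=
  ∀ x y, φ (wittBracket x y) = (1 / 2 : ℂ) • (wittBracket (φ x) y + wittBracket x (φ y))

theorem isHalfDerivation_of_we {φ : (ℤ →₀ ℂ) →ₗ[ℂ] (ℤ →₀ ℂ)}
    (h : ∀ i j, φ (wittBracket (we i) (we j)) =
      (1 / 2 : ℂ) • (wittBracket (φ (we i)) (we j) + wittBracket (we i) (φ (we j)))) :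
    IsHalfDerivation φ := by
  have hB : wittBracketₗ.compr₂ φ =
      (1 / 2 : ℂ) • (wittBracketₗ.comp φ + wittBracketₗ.compl₂ φ) := by
    refine lhom_ext fun i a => lhom_ext fun j b => ?_
    rw [← smul_single_one i a, ← smul_single_one j b, ← we, ← we]
    simp only [LinearMap.compr₂_apply, LinearMap.smul_apply, LinearMap.add_apply,
      LinearMap.comp_apply, LinearMap.compl₂_apply, map_smul, ← wittBracket_eq_wittBracketₗ, h]
  intro x y
  simpa only [wittBracket_eq_wittBracketₗ, LinearMap.compr₂_apply, LinearMap.smul_apply,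
    LinearMap.add_apply, LinearMap.comp_apply, LinearMap.compl₂_apply]
    using LinearMap.congr_fun₂ hB x y

theorem IsHalfDerivation.sub {φ ψ : (ℤ →₀ ℂ) →ₗ[ℂ] (ℤ →₀ ℂ)} (hφ : IsHalfDerivation φ)
    (hψ : IsHalfDerivation ψ) : IsHalfDerivation (φ - ψ) := by
  intro x y
  have hφxy := hφ x y
  have hψxy := hψ x y
  simp only [wittBracket_eq_wittBracketₗ] at hφxy hψxy ⊢
  simp only [LinearMap.sub_apply, map_sub, hφxy, hψxy]
  module

theorem IsHalfDerivation.we_we_apply {φ : (ℤ →₀ ℂ) →ₗ[ℂ] (ℤ →₀ ℂ)} (hφ : IsHalfDerivation φ)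
    (i j m : ℤ) :
    ((i : ℂ) - j) * φ (we (i + j)) m =
      (1 / 2 : ℂ) *
        (φ (we i) (m - j) * ((m : ℂ) - 2 * j) + φ (we j) (m - i) * (2 * (i : ℂ) - m)) := by
  have h := congrArg (· m) (hφ (we i) (we j))
  simpa only [wittBracket_we_we, map_smul, Finsupp.smul_apply, Finsupp.add_apply, smul_eq_mul,
    wittBracket_we_right_apply, wittBracket_we_left_apply] using h

noncomputable def laurentMul (α : ℤ →₀ ℂ) : (ℤ →₀ ℂ) →ₗ[ℂ] (ℤ →₀ ℂ) :=
  linearCombination ℂ fun i => α.sum fun j c => c • we (i + j)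

theorem laurentMul_we (α : ℤ →₀ ℂ) (i : ℤ) :
    laurentMul α (we i) = α.sum fun j c => c • we (i + j) := by
  rw [laurentMul, we, linearCombination_single, one_smul]

theorem laurentMul_we_apply (α : ℤ →₀ ℂ) (i m : ℤ) : laurentMul α (we i) m = α (m - i) := by
  simp_rw [laurentMul_we, we, smul_single_one, add_comm i]
  exact sum_single_add_apply α (fun _ c => c) (fun _ => rfl) i m

theorem isHalfDerivation_laurentMul (α : ℤ →₀ ℂ) : IsHalfDerivation (laurentMul α) := by
  refine isHalfDerivation_of_we fun i j => ext fun m => ?_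
  simp only [wittBracket_we_we, map_smul, Finsupp.smul_apply, Finsupp.add_apply, smul_eq_mul,
    wittBracket_we_right_apply, wittBracket_we_left_apply, laurentMul_we_apply]
  rw [show m - j - i = m - (i + j) by ring, show m - i - j = m - (i + j) by ring]
  ring

theorem IsHalfDerivation.apply_we_apply_eq_zero_of_ne {φ : (ℤ →₀ ℂ) →ₗ[ℂ] (ℤ →₀ ℂ)}
    (hφ : IsHalfDerivation φ) (h₀ : φ (we 0) = 0) {j m : ℤ} (hm : m ≠ 2 * j) :
    φ (we j) m = 0 := by
  have h := hφ.we_we_apply 0 j m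
  rw [h₀, zero_add, sub_zero, Finsupp.zero_apply, zero_mul, zero_add, Int.cast_zero] at h
  have key : ((m : ℂ) - 2 * j) * φ (we j) m = 0 := by linear_combination 2 * h
  have hm' : (m : ℂ) - 2 * j ≠ 0 := by
    rw [sub_ne_zero]
    exact_mod_cast hm
  exact (mul_eq_zero.mp key).resolve_left hm'

theorem IsHalfDerivation.apply_we_apply_two_mul {φ : (ℤ →₀ ℂ) →ₗ[ℂ] (ℤ →₀ ℂ)}
    (hφ : IsHalfDerivation φ) (h₀ : φ (we 0) = 0) (n : ℤ) :
    φ (we n) (2 * n) = 0 := by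
  obtain ⟨i, j, rfl, hi, hj, hij⟩ : ∃ i j : ℤ, i + j = n ∧ i ≠ 0 ∧ j ≠ 0 ∧ i ≠ j := by
    rcases le_or_gt n 0 with hn | hn
    · exact ⟨n - 1, 1, by ring, by omega, by omega, by omega⟩
    · exact ⟨n + 1, -1, by ring, by omega, by omega, by omega⟩
  have h := hφ.we_we_apply i j (2 * (i + j))
  rw [hφ.apply_we_apply_eq_zero_of_ne (j := i) (m := 2 * (i + j) - j) h₀ (by omega),
    hφ.apply_we_apply_eq_zero_of_ne (j := j) (m := 2 * (i + j) - i) h₀ (by omega)] at h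
  have hij' : (i : ℂ) - j ≠ 0 := by
    rw [sub_ne_zero]
    exact_mod_cast hij
  simpa [hij'] using h

theorem IsHalfDerivation.eq_zero_of_apply_we_zero {φ : (ℤ →₀ ℂ) →ₗ[ℂ] (ℤ →₀ ℂ)}
    (hφ : IsHalfDerivation φ) (h₀ : φ (we 0) = 0) : φ = 0 := by
  refine lhom_ext fun n a => ?_
  rw [← smul_single_one, map_smul, LinearMap.zero_apply, ← we]
  suffices φ (we n) = 0 by rw [this, smul_zero]
  ext m
  obtain rfl | hm := eq_or_ne m (2 * n)
  · exact hφ.apply_we_apply_two_mul h₀ n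
  · exact hφ.apply_we_apply_eq_zero_of_ne h₀ hm

theorem IsHalfDerivation.eq_laurentMul {φ : (ℤ →₀ ℂ) →ₗ[ℂ] (ℤ →₀ ℂ)}
    (hφ : IsHalfDerivation φ) :
    φ = laurentMul (φ (we 0)) := by
  have h₀ : (φ - laurentMul (φ (we 0))) (we 0) = 0 := by
    ext m
    simp [laurentMul_we_apply]
  exact sub_eq_zero.mp ((hφ.sub (isHalfDerivation_laurentMul _)).eq_zero_of_apply_we_zero h₀)

end Witt

/-- A linear map `φ` on the Witt algebra is a 1/2-derivation iff
there is a finitely supported family `(α_j)` with `φ (e i) = Σ_j α_j e (i+j)`. -/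
theorem witt_half_derivation_iff (φ : (ℤ →₀ ℂ) →ₗ[ℂ] (ℤ →₀ ℂ)) :
    (∀ x y : ℤ →₀ ℂ, φ (wittBracket x y) =
        (1 / 2 : ℂ) • (wittBracket (φ x) y + wittBracket x (φ y))) ↔
    ∃ α : ℤ →₀ ℂ, ∀ i : ℤ, φ (we i) = α.sum fun j c => c • we (i + j) := by
  constructor
  · intro hφ
    refine ⟨φ (we 0), fun i => ?_⟩
    rw [← Witt.laurentMul_we, ← Witt.IsHalfDerivation.eq_laurentMul hφ]
  · rintro ⟨α, hα⟩
    have hφ : φ = Witt.laurentMul α :=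
      Finsupp.lhom_ext fun i a => by
        rw [← Finsupp.smul_single_one, map_smul, map_smul, ← we, hα, Witt.laurentMul_we]
    exact hφ ▸ Witt.isHalfDerivation_laurentMul α
end

section
/- For every finitely supported family (α_k)_{k ∈ ℤ} of complex numbers, the bilinear product on the Witt algebra W defined on basis elements by e_i · e_j = Σ_{k ∈ ℤ} α_k e_{i+j+k} is commutative and associative and satisfies the compatibility condition 2 z·[x,y] = [z·x, y] + [x, z·y] for all x, y, z ∈ W; hence every mutation of the Laurent polynomial algebra gives a transposed Poisson structure whose Lie part is the Witt algebra. -/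
/-- The mutation product on the Witt algebra determined by a finitely supported
family `α`, defined by `e_i · e_j = Σ_k α_k e_{i+j+k}` and extended bilinearly. -/
noncomputable def wittMul (α : ℤ →₀ ℂ) (f g : ℤ →₀ ℂ) : ℤ →₀ ℂ :=
  f.sum fun i a => g.sum fun j b => α.sum fun k c =>
    (a * b * c) • Finsupp.single (i + j + k) (1 : ℂ)

/-!
Identify `ℤ →₀ ℂ` with the Laurent polynomials `ℂ[T;T⁻¹]`, `e i` being `T ^ i`. Then
`wittMul α x y = x * y * α` is a mutation of the Laurent product, hence commutative and
associative, and the Witt bracket is `[x, y] = D x * y - x * D y` for the Euler derivation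
`D = T d/dT`, i.e. `D (T ^ i) = i T ^ i`. For any derivation `D` of a commutative algebra the
Leibniz rule gives `2 w [x, y] = [w x, y] + [x, w y]`; take `w = z α`.
-/

open AddMonoidAlgebra LaurentPolynomial

theorem Derivation.transposed_leibniz {R A : Type*} [CommSemiring R] [CommRing A] [Algebra R A]
    (D : Derivation R A A) (w x y : A) :
    2 * (w * (D x * y - x * D y)) =
      (D (w * x) * y - w * x * D y) + (D x * (w * y) - x * D (w * y)) := by
  simp only [Derivation.leibniz, smul_eq_mul]
  ring

namespace LaurentPolynomial

variable {R : Type*} [CommRing R]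

variable (R) in
noncomputable def eulerOperator : R[T;T⁻¹] →ₗ[R] R[T;T⁻¹] :=
  (Finsupp.lsum R fun n : ℤ => (n : R) • lsingle n) ∘ₗ (coeffLinearEquiv R).toLinearMap

@[simp]
theorem eulerOperator_single (n : ℤ) (r : R) :
    eulerOperator R (single n r) = single n (n * r) := by
  simp [eulerOperator, -single_eq_C_mul_T]

theorem eulerOperator_mul (a b : R[T;T⁻¹]) :
    eulerOperator R (a * b) = a * eulerOperator R b + b * eulerOperator R a := by
  induction a using induction_linear with
  | zero => simp
  | add x y hx hy => simp only [add_mul, map_add, hx, hy]; ring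
  | single m r =>
    induction b using induction_linear with
    | zero => simp
    | add x y hx hy => simp only [mul_add, map_add, hx, hy]; ring
    | single n s =>
      simp only [single_mul_single, eulerOperator_single, add_comm n m, ← single_add]
      congr 1
      push_cast
      ring

variable (R) in
noncomputable def eulerDerivation : Derivation R R[T;T⁻¹] R[T;T⁻¹] :=
  Derivation.mk' (eulerOperator R) eulerOperator_mul

@[simp]
theorem eulerDerivation_single (n : ℤ) (r : R) :
    eulerDerivation R (single n r) = single n (n * r) :=
  eulerOperator_single n r

end LaurentPolynomial

theorem wittMul_eq_coeff_mul (α f g : ℤ →₀ ℂ) :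
    wittMul α f g = (ofCoeff f * ofCoeff g * ofCoeff α : ℂ[T;T⁻¹]).coeff := by
  rw [mul_def (ofCoeff f)]
  simp only [Finsupp.sum_mul, mul_def (single _ _), coeff_single, zero_mul, single_zero,
    Finsupp.sum_fun_zero, Finsupp.sum_single_index, coeff_finsuppSum, wittMul,
    Finsupp.smul_single_one]

theorem wittBracket_eq_coeff_eulerDerivation (f g : ℤ →₀ ℂ) :
    wittBracket f g = (eulerDerivation ℂ (ofCoeff f) * ofCoeff g -
      ofCoeff f * eulerDerivation ℂ (ofCoeff g)).coeff := by
  conv_rhs => rw [← f.sum_single, ← g.sum_single]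
  simp only [ofCoeff_finsuppSum, map_finsuppSum, Finsupp.sum_mul, Finsupp.mul_sum,
    ofCoeff_single, eulerDerivation_single, single_mul_single, coeff_sub, coeff_finsuppSum,
    coeff_single, ← Finsupp.sum_sub, wittBracket]
  rw [Finsupp.sum_comm]
  refine Finsupp.sum_congr fun j _ => Finsupp.sum_congr fun i _ => ?_
  rw [Finsupp.smul_single_one, ← Finsupp.single_sub]
  congr 1
  ring

/-- For every finitely supported family `(α_k)`, the product
`e_i · e_j = Σ_k α_k e_{i+j+k}` is bilinear, commutative, associative, and
satisfies the transposed Leibniz rule with respect to the Witt bracket; hence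
it yields a transposed Poisson structure whose Lie part is the Witt algebra. -/
theorem wittMul_gives_transposedPoisson (α : ℤ →₀ ℂ) :
    (∀ i j : ℤ, wittMul α (we i) (we j) = α.sum fun k c => c • we (i + j + k)) ∧
    (∀ x y z : ℤ →₀ ℂ, wittMul α (x + y) z = wittMul α x z + wittMul α y z) ∧
    (∀ (c : ℂ) (x y : ℤ →₀ ℂ), wittMul α (c • x) y = c • wittMul α x y) ∧
    (∀ x y : ℤ →₀ ℂ, wittMul α x y = wittMul α y x) ∧
    (∀ x y z : ℤ →₀ ℂ, wittMul α (wittMul α x y) z = wittMul α x (wittMul α y z)) ∧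
    (∀ x y z : ℤ →₀ ℂ, (2 : ℂ) • wittMul α z (wittBracket x y) =
        wittBracket (wittMul α z x) y + wittBracket x (wittMul α z y)) := by
  refine ⟨fun i j => ?_, fun x y z => ?_, fun c x y => ?_, fun x y => ?_, fun x y z => ?_,
    fun x y z => ?_⟩
  · simp [wittMul, we, -Finsupp.single_mul]
  · simp only [wittMul_eq_coeff_mul, ofCoeff_add, add_mul, coeff_add]
  · simp only [wittMul_eq_coeff_mul, ofCoeff_smul, smul_mul_assoc, coeff_smul]
  · rw [wittMul_eq_coeff_mul, wittMul_eq_coeff_mul, mul_comm (ofCoeff x)]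
  · simp only [wittMul_eq_coeff_mul, ofCoeff_coeff]
    congr 1
    ring
  · simp only [wittMul_eq_coeff_mul, wittBracket_eq_coeff_eulerDerivation, ofCoeff_coeff,
      ← coeff_add, two_smul, ← two_mul]
    rw [mul_right_comm (ofCoeff z) (ofCoeff x), mul_right_comm (ofCoeff z) (ofCoeff y)]
    congr 1
    linear_combination (eulerDerivation ℂ).transposed_leibniz (ofCoeff z * ofCoeff α)
      (ofCoeff x) (ofCoeff y)
end

section
/- Let a, b ∈ ℂ with b ≠ −1. Then every 1/2-derivation of the Lie algebra 𝒲(a,b) is trivial, i.e., a scalar multiple of the identity map. -/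
/-- The underlying space of the Lie algebra `𝒲(a,b)`, with basis
`L m = single (Sum.inl m) 1` and `I n = single (Sum.inr n) 1`. -/
abbrev Wab : Type := (ℤ ⊕ ℤ) →₀ ℂ

/-- The bracket of `𝒲(a,b)` on basis elements:
`[L m, L n] = (m-n) L (m+n)`, `[L m, I n] = -(n+a+bm) I (m+n)`, `[I m, I n] = 0`. -/
noncomputable def wabBasic (a b : ℂ) : ℤ ⊕ ℤ → ℤ ⊕ ℤ → Wab
  | Sum.inl m, Sum.inl n => (((m : ℂ) - (n : ℂ))) • Finsupp.single (Sum.inl (m + n)) (1 : ℂ)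
  | Sum.inl m, Sum.inr n => (-((n : ℂ) + a + b * (m : ℂ))) • Finsupp.single (Sum.inr (m + n)) (1 : ℂ)
  | Sum.inr m, Sum.inl n => (((m : ℂ) + a + b * (n : ℂ))) • Finsupp.single (Sum.inr (m + n)) (1 : ℂ)
  | Sum.inr _, Sum.inr _ => 0

/-- The Lie bracket of `𝒲(a,b)`, extended bilinearly from basis elements. -/
noncomputable def wabBracket (a b : ℂ) (f g : Wab) : Wab :=
  f.sum fun p c => g.sum fun q d => (c * d) • wabBasic a b p q

/-- The basis element `L m` of `𝒲(a,b)`. -/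
noncomputable def Lgen (m : ℤ) : Wab := Finsupp.single (Sum.inl m) 1

/-- The basis element `I m` of `𝒲(a,b)`. -/
noncomputable def Igen (m : ℤ) : Wab := Finsupp.single (Sum.inr m) 1

/-!
Write `α s` and `β s` for the coefficients of `L s` and `I s` in `φ (L 0)`. The identity for
`φ [L 0, x]` shows that, away from finitely many exceptional indices, the `L`-coefficients of
`φ (L n)` are the shifted `α`'s, while its `I`-coefficients and the `I`-coefficients of `φ (I n)`
are multiples of the shifted `β`'s and `α`'s respectively. The relations coming from
`[L m, L n]` alone hold for every `α` (multiplication by a Laurent polynomial is a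
`1/2`-derivation of the Witt algebra); it is the action on the `I`'s that eliminates the
unknowns and leaves polynomial relations such as `4 s (1 + b) α s = 0`, so `b ≠ -1` kills
`α s` for `s ≠ 0` and every `β s`. Exceptional indices are reached by splitting
`n = m + (n - m)` in a different way.
-/

lemma Finsupp.sum_mul_eq_mul_apply {α R : Type*} [DecidableEq α] [CommSemiring R]
    (f : α →₀ R) (g : α → R) (t : α) (v : R) (hg : ∀ p, g p = if p = t then v else 0) :
    (f.sum fun p c => c * g p) = v * f t := by
  simp only [hg, mul_ite, mul_zero]
  rw [Finsupp.sum, Finset.sum_ite_eq' f.support t (fun p => f p * v), mul_comm]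
  split
  · rfl
  · rw [Finsupp.notMem_support_iff.mp ‹_›, mul_zero]

section Bracket

variable (a b : ℂ) (f : Wab)

lemma wabBracket_single_right_apply (q r : ℤ ⊕ ℤ) :
    wabBracket a b f (Finsupp.single q 1) r = f.sum fun p c => c * wabBasic a b p q r := by
  simp [wabBracket, Finsupp.sum_apply, Finsupp.sum_single_index]

lemma wabBracket_single_left_apply (p r : ℤ ⊕ ℤ) :
    wabBracket a b (Finsupp.single p 1) f r = f.sum fun q d => d * wabBasic a b p q r := by
  simp [wabBracket, Finsupp.sum_apply, Finsupp.sum_single_index]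

lemma wabBracket_Lgen_right_inl (n k : ℤ) :
    wabBracket a b f (Lgen n) (Sum.inl k) = ((k : ℂ) - 2 * n) * f (Sum.inl (k - n)) := by
  classical
  refine (wabBracket_single_right_apply ..).trans (f.sum_mul_eq_mul_apply _ _ _ ?_)
  rintro (i | i) <;>
    simp only [wabBasic, Finsupp.smul_apply, Finsupp.single_apply, Sum.inl.injEq, reduceCtorEq,
      if_false, smul_eq_mul, mul_zero]
  all_goals split_ifs <;> first | omega | (subst_vars; push_cast; ring)

lemma wabBracket_Lgen_right_inr (n k : ℤ) :
    wabBracket a b f (Lgen n) (Sum.inr k) = ((k : ℂ) - n + a + b * n) * f (Sum.inr (k - n)) := by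
  classical
  refine (wabBracket_single_right_apply ..).trans (f.sum_mul_eq_mul_apply _ _ _ ?_)
  rintro (i | i) <;>
    simp only [wabBasic, Finsupp.smul_apply, Finsupp.single_apply, Sum.inr.injEq, reduceCtorEq,
      if_false, smul_eq_mul, mul_zero]
  all_goals split_ifs <;> first | omega | (subst_vars; push_cast; ring)

lemma wabBracket_Igen_right_inl (n k : ℤ) : wabBracket a b f (Igen n) (Sum.inl k) = 0 := by
  refine (wabBracket_single_right_apply ..).trans (Finset.sum_eq_zero fun p _ => ?_)
  rcases p with i | i <;> simp [wabBasic]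

lemma wabBracket_Igen_right_inr (n k : ℤ) :
    wabBracket a b f (Igen n) (Sum.inr k) =
      -((n : ℂ) + a + b * (k - n)) * f (Sum.inl (k - n)) := by
  classical
  refine (wabBracket_single_right_apply ..).trans (f.sum_mul_eq_mul_apply _ _ _ ?_)
  rintro (i | i) <;>
    simp only [wabBasic, Finsupp.smul_apply, Finsupp.single_apply, Sum.inl.injEq, Sum.inr.injEq,
      Finsupp.zero_apply, reduceCtorEq, if_false, smul_eq_mul]
  all_goals split_ifs <;> first | omega | (subst_vars; push_cast; ring)

lemma wabBracket_Lgen_left_inl (m k : ℤ) :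
    wabBracket a b (Lgen m) f (Sum.inl k) = (2 * (m : ℂ) - k) * f (Sum.inl (k - m)) := by
  classical
  refine (wabBracket_single_left_apply ..).trans (f.sum_mul_eq_mul_apply _ _ _ ?_)
  rintro (i | i) <;>
    simp only [wabBasic, Finsupp.smul_apply, Finsupp.single_apply, Sum.inl.injEq, reduceCtorEq,
      if_false, smul_eq_mul, mul_zero]
  all_goals split_ifs <;> first | omega | (subst_vars; push_cast; ring)

lemma wabBracket_Lgen_left_inr (m k : ℤ) :
    wabBracket a b (Lgen m) f (Sum.inr k) =
      -((k : ℂ) - m + a + b * m) * f (Sum.inr (k - m)) := by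
  classical
  refine (wabBracket_single_left_apply ..).trans (f.sum_mul_eq_mul_apply _ _ _ ?_)
  rintro (i | i) <;>
    simp only [wabBasic, Finsupp.smul_apply, Finsupp.single_apply, Sum.inr.injEq, reduceCtorEq,
      if_false, smul_eq_mul, mul_zero]
  all_goals split_ifs <;> first | omega | (subst_vars; push_cast; ring)

lemma wabBracket_Lgen_Lgen (m n : ℤ) :
    wabBracket a b (Lgen m) (Lgen n) = ((m : ℂ) - n) • Lgen (m + n) := by
  simp [wabBracket, Lgen, Finsupp.sum_single_index, wabBasic]

lemma wabBracket_Lgen_Igen (m n : ℤ) :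
    wabBracket a b (Lgen m) (Igen n) = -((n : ℂ) + a + b * m) • Igen (m + n) := by
  simp [wabBracket, Lgen, Igen, Finsupp.sum_single_index, wabBasic]

end Bracket

lemma Int.exists_ne_zero_ne_ne_two_mul (n : ℤ) :
    ∃ m : ℤ, m ≠ 0 ∧ m ≠ n ∧ 2 * m ≠ n :=
  ⟨if n = 1 ∨ n = 2 then 3 else 1, by split_ifs <;> omega⟩

def IsHalfDerivation (a b : ℂ) (φ : Wab →ₗ[ℂ] Wab) : Prop :=
  ∀ x y : Wab, φ (wabBracket a b x y) =
    (1 / 2 : ℂ) • (wabBracket a b (φ x) y + wabBracket a b x (φ y))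

namespace IsHalfDerivation

variable {a b : ℂ} {φ : Wab →ₗ[ℂ] Wab} (hφ : IsHalfDerivation a b φ)
include hφ

/-! The defining identity on the pairs `(L m, L n)` and `(L m, I n)`, read off at the
coordinates `L k` and `I k`. -/

lemma LL_inl (m n k : ℤ) :
    2 * ((m : ℂ) - n) * φ (Lgen (m + n)) (Sum.inl k) =
      ((k : ℂ) - 2 * n) * φ (Lgen m) (Sum.inl (k - n)) +
        (2 * (m : ℂ) - k) * φ (Lgen n) (Sum.inl (k - m)) := by
  have h := congrArg (· (Sum.inl k)) (hφ (Lgen m) (Lgen n))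
  simp only [wabBracket_Lgen_Lgen, map_smul, Finsupp.smul_apply, Finsupp.add_apply, smul_eq_mul,
    wabBracket_Lgen_right_inl, wabBracket_Lgen_left_inl] at h
  linear_combination 2 * h

lemma LL_inr (m n k : ℤ) :
    2 * ((m : ℂ) - n) * φ (Lgen (m + n)) (Sum.inr k) =
      ((k : ℂ) - n + a + b * n) * φ (Lgen m) (Sum.inr (k - n)) -
        ((k : ℂ) - m + a + b * m) * φ (Lgen n) (Sum.inr (k - m)) := by
  have h := congrArg (· (Sum.inr k)) (hφ (Lgen m) (Lgen n))
  simp only [wabBracket_Lgen_Lgen, map_smul, Finsupp.smul_apply, Finsupp.add_apply, smul_eq_mul,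
    wabBracket_Lgen_right_inr, wabBracket_Lgen_left_inr] at h
  linear_combination 2 * h

lemma LI_inl (m n k : ℤ) :
    -2 * ((n : ℂ) + a + b * m) * φ (Igen (m + n)) (Sum.inl k) =
      (2 * (m : ℂ) - k) * φ (Igen n) (Sum.inl (k - m)) := by
  have h := congrArg (· (Sum.inl k)) (hφ (Lgen m) (Igen n))
  simp only [wabBracket_Lgen_Igen, map_smul, Finsupp.smul_apply, Finsupp.add_apply, smul_eq_mul,
    wabBracket_Igen_right_inl, wabBracket_Lgen_left_inl] at h
  linear_combination 2 * h

lemma LI_inr (m n k : ℤ) :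
    -2 * ((n : ℂ) + a + b * m) * φ (Igen (m + n)) (Sum.inr k) =
      -((n : ℂ) + a + b * (k - n)) * φ (Lgen m) (Sum.inl (k - n)) -
        ((k : ℂ) - m + a + b * m) * φ (Igen n) (Sum.inr (k - m)) := by
  have h := congrArg (· (Sum.inr k)) (hφ (Lgen m) (Igen n))
  simp only [wabBracket_Lgen_Igen, map_smul, Finsupp.smul_apply, Finsupp.add_apply, smul_eq_mul,
    wabBracket_Igen_right_inr, wabBracket_Lgen_left_inr] at h
  linear_combination 2 * h

lemma Igen_apply_inl (n j : ℤ) : φ (Igen n) (Sum.inl j) = 0 := by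
  have of_ne : ∀ n j : ℤ, (j : ℂ) - 2 * n - 2 * a ≠ 0 → φ (Igen n) (Sum.inl j) = 0 := by
    intro n j hne
    refine eq_zero_of_ne_zero_of_mul_left_eq_zero hne ?_
    have h := hφ.LI_inl 0 n j
    simp only [zero_add, sub_zero] at h
    push_cast at h
    linear_combination h
  by_cases hj : (j : ℂ) - 2 * n - 2 * a = 0
  · obtain ⟨m, hm0, hmj, -⟩ := Int.exists_ne_zero_ne_ne_two_mul j
    have hshift : φ (Igen (m + n)) (Sum.inl (m + j)) = 0 := of_ne _ _ <| by
      have : ((m + j : ℤ) : ℂ) - 2 * ((m + n : ℤ) : ℂ) - 2 * a = -m := by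
        push_cast; linear_combination hj
      rw [this, neg_ne_zero]
      exact_mod_cast hm0
    have h := hφ.LI_inl m n (m + j)
    rw [hshift, mul_zero, add_sub_cancel_left] at h
    have hmj' : 2 * (m : ℂ) - (m + j : ℤ) ≠ 0 := by
      exact_mod_cast (show 2 * m - (m + j) ≠ 0 by omega)
    exact eq_zero_of_ne_zero_of_mul_left_eq_zero hmj' h.symm
  · exact of_ne n j hj

lemma Lgen_apply_inl_eq (n k : ℤ) (h : k ≠ 2 * n) :
    φ (Lgen n) (Sum.inl k) = φ (Lgen 0) (Sum.inl (k - n)) := by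
  have hne : (k : ℂ) - 2 * n ≠ 0 := by exact_mod_cast (show k - 2 * n ≠ 0 by omega)
  have h0 := hφ.LL_inl 0 n k
  simp only [zero_add, sub_zero] at h0
  push_cast at h0
  exact sub_eq_zero.mp <| eq_zero_of_ne_zero_of_mul_left_eq_zero hne <| by linear_combination h0

lemma Igen_apply_inr_mul (n k : ℤ) :
    ((k : ℂ) - 2 * n - a) * φ (Igen n) (Sum.inr k) =
      -((n : ℂ) + a + b * (k - n)) * φ (Lgen 0) (Sum.inl (k - n)) := by
  have h := hφ.LI_inr 0 n k
  simp only [zero_add, sub_zero] at h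
  push_cast at h ⊢
  linear_combination h

lemma Lgen_zero_apply_inl_mul_poly (m n s : ℤ) (hms : m ≠ s) :
    (2 * ((n : ℂ) + a + b * m) * ((m : ℂ) + n + a + b * s) * ((s : ℂ) - n - a)
      + ((n : ℂ) + a + b * s + b * m) * ((s : ℂ) - m - n - a) * ((s : ℂ) - n - a)
      - ((s : ℂ) + n + a + b * m) * ((n : ℂ) + a + b * s) * ((s : ℂ) - m - n - a))
      * φ (Lgen 0) (Sum.inl s) = 0 := by
  have hmn := hφ.LI_inr m n (s + m + n)
  rw [show s + m + n - n = s + m by ring, show s + m + n - m = s + n by ring,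
    hφ.Lgen_apply_inl_eq m (s + m) (by omega), add_sub_cancel_right] at hmn
  have hm := hφ.Igen_apply_inr_mul (m + n) (s + m + n)
  have hn := hφ.Igen_apply_inr_mul n (s + n)
  rw [show s + m + n - (m + n) = s by ring] at hm
  rw [add_sub_cancel_right] at hn
  push_cast at hmn hm hn ⊢
  linear_combination (((s : ℂ) - m - n - a) * ((s : ℂ) - n - a)) * hmn
    + (2 * ((n : ℂ) + a + b * m) * ((s : ℂ) - n - a)) * hm
    - (((s : ℂ) + n + a + b * m) * ((s : ℂ) - m - n - a)) * hn

lemma Lgen_zero_apply_inl (hb : b ≠ -1) (s : ℤ) (hs : s ≠ 0) :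
    φ (Lgen 0) (Sum.inl s) = 0 := by
  have hne : 4 * (s : ℂ) * (1 + b) ≠ 0 := by
    have hb' : (1 : ℂ) + b ≠ 0 := fun h => hb (by linear_combination h)
    have hs' : (s : ℂ) ≠ 0 := by exact_mod_cast hs
    simp [hb', hs']
  refine eq_zero_of_ne_zero_of_mul_left_eq_zero hne ?_
  -- these five instances of the polynomial combine to `4 s (1 + b)`
  have q1 := hφ.Lgen_zero_apply_inl_mul_poly (s + 1) 0 s (by omega)
  have q2 := hφ.Lgen_zero_apply_inl_mul_poly (s + 2) 0 s (by omega)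
  have q3 := hφ.Lgen_zero_apply_inl_mul_poly (s + 3) 0 s (by omega)
  have q4 := hφ.Lgen_zero_apply_inl_mul_poly (s + 1) 1 s (by omega)
  have q5 := hφ.Lgen_zero_apply_inl_mul_poly (s + 2) 1 s (by omega)
  push_cast at q1 q2 q3 q4 q5
  linear_combination 3 * q1 - 4 * q2 + q3 - 2 * q4 + 2 * q5

lemma Lgen_apply_inl_self (n : ℤ) : φ (Lgen n) (Sum.inl n) = φ (Lgen 0) (Sum.inl 0) := by
  rcases eq_or_ne n 0 with rfl | hn
  · rfl
  · simpa using hφ.Lgen_apply_inl_eq n n (by omega)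

lemma Lgen_apply_inl_of_ne (hb : b ≠ -1) (n k : ℤ) (hkn : k ≠ n) :
    φ (Lgen n) (Sum.inl k) = 0 := by
  rcases eq_or_ne k (2 * n) with rfl | h2n
  · obtain ⟨m, hm0, hmn, h2mn⟩ := Int.exists_ne_zero_ne_ne_two_mul n
    have hL0 := hφ.Lgen_zero_apply_inl hb n (by omega)
    have h := hφ.LL_inl m (n - m) (2 * n)
    rw [add_sub_cancel, hφ.Lgen_apply_inl_eq m _ (by omega),
      hφ.Lgen_apply_inl_eq (n - m) _ (by omega), show 2 * n - (n - m) - m = n by ring,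
      show 2 * n - m - (n - m) = n by ring, hL0] at h
    have hne : 2 * ((m : ℂ) - (n - m : ℤ)) ≠ 0 := by
      exact_mod_cast (show 2 * (m - (n - m)) ≠ 0 by omega)
    exact eq_zero_of_ne_zero_of_mul_left_eq_zero hne (by simpa using h)
  · rw [hφ.Lgen_apply_inl_eq n k h2n]
    exact hφ.Lgen_zero_apply_inl hb (k - n) (by omega)

lemma Lgen_apply_inr_mul (n k : ℤ) :
    ((k : ℂ) + a - 2 * n) * φ (Lgen n) (Sum.inr k) =
      ((k : ℂ) - n + a + b * n) * φ (Lgen 0) (Sum.inr (k - n)) := by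
  have h := hφ.LL_inr 0 n k
  simp only [zero_add, sub_zero] at h
  push_cast at h ⊢
  linear_combination h

lemma Lgen_zero_apply_inr_mul_poly (m n s : ℤ) :
    (2 * ((m : ℂ) - n) * ((s : ℂ) + a + b * (m + n)) * ((s : ℂ) - m + a) * ((s : ℂ) - n + a)
      - ((s : ℂ) + m + a + b * n) * ((s : ℂ) + a + b * m) * ((s : ℂ) - m - n + a)
          * ((s : ℂ) - n + a)
      + ((s : ℂ) + n + a + b * m) * ((s : ℂ) + a + b * n) * ((s : ℂ) - m - n + a)
          * ((s : ℂ) - m + a))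
      * φ (Lgen 0) (Sum.inr s) = 0 := by
  have hmn := hφ.LL_inr m n (s + m + n)
  rw [show s + m + n - n = s + m by ring, show s + m + n - m = s + n by ring] at hmn
  have h := hφ.Lgen_apply_inr_mul (m + n) (s + m + n)
  have hm := hφ.Lgen_apply_inr_mul m (s + m)
  have hn := hφ.Lgen_apply_inr_mul n (s + n)
  rw [show s + m + n - (m + n) = s by ring] at h
  rw [add_sub_cancel_right] at hm hn
  push_cast at hmn h hm hn ⊢
  linear_combination (((s : ℂ) - m - n + a) * ((s : ℂ) - m + a) * ((s : ℂ) - n + a)) * hmn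
    - (2 * ((m : ℂ) - n) * ((s : ℂ) - m + a) * ((s : ℂ) - n + a)) * h
    + (((s : ℂ) + m + a + b * n) * ((s : ℂ) - m - n + a) * ((s : ℂ) - n + a)) * hm
    - (((s : ℂ) + n + a + b * m) * ((s : ℂ) - m - n + a) * ((s : ℂ) - m + a)) * hn

lemma Lgen_zero_apply_inr (hb : b ≠ -1) (s : ℤ) : φ (Lgen 0) (Sum.inr s) = 0 := by
  have hb' : (1 : ℂ) + b ≠ 0 := fun h => hb (by linear_combination h)
  have q31 := hφ.Lgen_zero_apply_inr_mul_poly 3 1 s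
  have q32 := hφ.Lgen_zero_apply_inr_mul_poly 3 2 s
  have q21 := hφ.Lgen_zero_apply_inr_mul_poly 2 1 s
  push_cast at q31 q32 q21
  have hβb : b * ((1 + b) * φ (Lgen 0) (Sum.inr s)) = 0 := by
    linear_combination (1 / 6 : ℂ) * q32 - (1 / 6 : ℂ) * q31
  have hβsa : ((s : ℂ) + a) * ((1 + b) * (2 - b) * φ (Lgen 0) (Sum.inr s)) = 0 := by
    linear_combination (1 / 2 : ℂ) * q21 - 3 * hβb
  rcases eq_or_ne ((s : ℂ) + a) 0 with hsa | hsa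
  · rcases eq_or_ne b 0 with rfl | hb0
    · -- the coefficients `φ (L m) (I (s + m))` vanish, so `[L 1, L (-1)] = 2 L 0` isolates `β s`
      have hside : ∀ m : ℤ, m ≠ 0 → φ (Lgen m) (Sum.inr (s + m)) = 0 := by
        intro m hm0
        have h := hφ.Lgen_apply_inr_mul m (s + m)
        rw [add_sub_cancel_right] at h
        push_cast at h
        have hm0' : -(m : ℂ) ≠ 0 := neg_ne_zero.mpr (by exact_mod_cast hm0)
        refine eq_zero_of_ne_zero_of_mul_left_eq_zero hm0' ?_
        linear_combination h - (φ (Lgen m) (Sum.inr (s + m)) - φ (Lgen 0) (Sum.inr s)) * hsa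
      have h := hφ.LL_inr 1 (-1) s
      rw [show s - -1 = s + 1 by ring, show s - 1 = s + -1 by ring, hside 1 one_ne_zero,
        hside (-1) (by norm_num)] at h
      simpa using h
    · exact (mul_eq_zero.mp (eq_zero_of_ne_zero_of_mul_left_eq_zero hb0 hβb)).resolve_left hb'
  · have h := eq_zero_of_ne_zero_of_mul_left_eq_zero hsa hβsa
    refine (mul_eq_zero.mp ?_).resolve_left (mul_ne_zero two_ne_zero hb')
    linear_combination h + hβb

lemma Lgen_apply_inr (hb : b ≠ -1) (n k : ℤ) : φ (Lgen n) (Sum.inr k) = 0 := by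
  have of_ne : ∀ n k : ℤ, (k : ℂ) + a - 2 * n ≠ 0 → φ (Lgen n) (Sum.inr k) = 0 := by
    intro n k hne
    have h := hφ.Lgen_apply_inr_mul n k
    rw [hφ.Lgen_zero_apply_inr hb, mul_zero] at h
    exact eq_zero_of_ne_zero_of_mul_left_eq_zero hne h
  rcases eq_or_ne ((k : ℂ) + a - 2 * n) 0 with hk | hk
  · obtain ⟨m, hm0, hmn, h2mn⟩ := Int.exists_ne_zero_ne_ne_two_mul n
    have hm : φ (Lgen m) (Sum.inr (k - (n - m))) = 0 := of_ne _ _ <| by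
      have : ((k - (n - m) : ℤ) : ℂ) + a - 2 * m = (n - m : ℤ) := by
        push_cast; linear_combination hk
      rw [this]
      exact_mod_cast (show n - m ≠ 0 by omega)
    have hnm : φ (Lgen (n - m)) (Sum.inr (k - m)) = 0 := of_ne _ _ <| by
      have : ((k - m : ℤ) : ℂ) + a - 2 * ((n - m : ℤ) : ℂ) = m := by
        push_cast; linear_combination hk
      rw [this]
      exact_mod_cast hm0
    have h := hφ.LL_inr m (n - m) k
    rw [add_sub_cancel, hm, hnm, mul_zero, mul_zero, sub_zero] at h
    have hne : 2 * ((m : ℂ) - (n - m : ℤ)) ≠ 0 := by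
      exact_mod_cast (show 2 * (m - (n - m)) ≠ 0 by omega)
    exact eq_zero_of_ne_zero_of_mul_left_eq_zero hne h
  · exact of_ne n k hk

lemma Igen_apply_inr_self (n : ℤ) : φ (Igen n) (Sum.inr n) = φ (Lgen 0) (Sum.inl 0) := by
  have of_ne : ∀ n : ℤ, (n : ℂ) + a ≠ 0 →
      φ (Igen n) (Sum.inr n) = φ (Lgen 0) (Sum.inl 0) := by
    intro n hn
    have h := hφ.Igen_apply_inr_mul n n
    simp only [sub_self] at h
    exact sub_eq_zero.mp <| eq_zero_of_ne_zero_of_mul_left_eq_zero hn <| by linear_combination -h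
  rcases eq_or_ne ((n : ℂ) + a) 0 with hn | hn
  · rcases eq_or_ne b 0 with rfl | hb0
    · have hprev := of_ne (n - 1) <| by
        rw [show ((n - 1 : ℤ) : ℂ) + a = -1 by push_cast; linear_combination hn]
        norm_num
      have h := hφ.LI_inr 1 (n - 1) n
      rw [add_sub_cancel, sub_sub_cancel, hφ.Lgen_apply_inl_self, hprev] at h
      push_cast at h
      refine sub_eq_zero.mp <| eq_zero_of_ne_zero_of_mul_left_eq_zero two_ne_zero ?_
      linear_combination h + (2 * (φ (Igen n) (Sum.inr n) - φ (Lgen 0) (Sum.inl 0))) * hn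
    · have hnext := of_ne (n + 1) <| by
        rw [show ((n + 1 : ℤ) : ℂ) + a = 1 by push_cast; linear_combination hn]
        norm_num
      have h := hφ.LI_inr 1 n (n + 1)
      rw [add_comm 1 n, add_sub_cancel_left, add_sub_cancel_right, hφ.Lgen_apply_inl_self,
        hnext] at h
      push_cast at h
      refine sub_eq_zero.mp <| eq_zero_of_ne_zero_of_mul_left_eq_zero hb0 ?_
      linear_combination h - (φ (Igen n) (Sum.inr n) - φ (Lgen 0) (Sum.inl 0)) * hn
  · exact of_ne n hn

lemma Igen_apply_inr_of_ne (hb : b ≠ -1) (n k : ℤ) (hkn : k ≠ n) :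
    φ (Igen n) (Sum.inr k) = 0 := by
  have of_ne : ∀ n k : ℤ, k ≠ n → (k : ℂ) - 2 * n - a ≠ 0 →
      φ (Igen n) (Sum.inr k) = 0 := by
    intro n k hkn hne
    have h := hφ.Igen_apply_inr_mul n k
    rw [hφ.Lgen_zero_apply_inl hb (k - n) (by omega), mul_zero] at h
    exact eq_zero_of_ne_zero_of_mul_left_eq_zero hne h
  rcases eq_or_ne ((k : ℂ) - 2 * n - a) 0 with hk | hk
  · obtain ⟨m, hm0, hm⟩ : ∃ m : ℤ, m ≠ 0 ∧ (k : ℂ) - n - m * (1 - b) ≠ 0 := by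
      by_contra! hall
      have h1 := hall 1 one_ne_zero
      have h2 := hall 2 two_ne_zero
      have : ((k - n : ℤ) : ℂ) = 0 := by push_cast at h1 h2 ⊢; linear_combination 2 * h1 - h2
      exact hkn (by simpa [sub_eq_zero] using this)
    have hside : φ (Igen (n - m)) (Sum.inr (k - m)) = 0 := of_ne _ _ (by omega) <| by
      rw [show ((k - m : ℤ) : ℂ) - 2 * ((n - m : ℤ) : ℂ) - a = m by
        push_cast; linear_combination hk]
      exact_mod_cast hm0
    have h := hφ.LI_inr m (n - m) k
    rw [add_sub_cancel, hφ.Lgen_apply_inl_of_ne hb m _ (by omega), hside] at h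
    push_cast at h
    refine eq_zero_of_ne_zero_of_mul_left_eq_zero
      (mul_ne_zero (by norm_num : (-2 : ℂ) ≠ 0) hm) ?_
    linear_combination h - 2 * φ (Igen n) (Sum.inr k) * hk
  · exact of_ne n k hkn hk

lemma map_Lgen (hb : b ≠ -1) (n : ℤ) : φ (Lgen n) = φ (Lgen 0) (Sum.inl 0) • Lgen n := by
  ext (k | k) <;> rw [Finsupp.smul_apply]
  · rcases eq_or_ne k n with rfl | hkn
    · rw [hφ.Lgen_apply_inl_self]; simp [Lgen]
    · rw [hφ.Lgen_apply_inl_of_ne hb n k hkn]; simp [Lgen, hkn]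
  · rw [hφ.Lgen_apply_inr hb]; simp [Lgen]

lemma map_Igen (hb : b ≠ -1) (n : ℤ) : φ (Igen n) = φ (Lgen 0) (Sum.inl 0) • Igen n := by
  ext (k | k) <;> rw [Finsupp.smul_apply]
  · rw [hφ.Igen_apply_inl]; simp [Igen]
  · rcases eq_or_ne k n with rfl | hkn
    · rw [hφ.Igen_apply_inr_self]; simp [Igen]
    · rw [hφ.Igen_apply_inr_of_ne hb n k hkn]; simp [Igen, hkn]

end IsHalfDerivation

/-- For `b ≠ -1`, every 1/2-derivation of `𝒲(a,b)` is trivial. -/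
theorem wab_half_derivation_trivial (a b : ℂ) (hb : b ≠ -1)
    (φ : Wab →ₗ[ℂ] Wab)
    (hφ : ∀ x y : Wab, φ (wabBracket a b x y) =
        (1 / 2 : ℂ) • (wabBracket a b (φ x) y + wabBracket a b x (φ y))) :
    ∃ κ : ℂ, φ = κ • LinearMap.id := by
  have hφ : IsHalfDerivation a b φ := hφ
  refine ⟨φ (Lgen 0) (Sum.inl 0), Finsupp.basisSingleOne.ext fun p => ?_⟩
  rcases p with n | n
  · simpa [Lgen] using hφ.map_Lgen hb n
  · simpa [Igen] using hφ.map_Igen hb n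
end

section
/- Let φ be a 1/2-derivation of the thin Lie algebra L and write φ(e_1) = Σ_{i ≥ 1} α_i e_i (a finite sum). Then for every n ≥ 2, φ(e_n) = (1 − 2^{2−n}) α_1 e_n + 2^{2−n} (ad e_1)^{n−2}(φ(e_2)), where ad e_1 denotes the map x ↦ [e_1, x]. -/
/-- The underlying space of the thin Lie algebra, with basis
`e i = single i 1` for `i : ℕ+`. -/
abbrev Thin : Type := ℕ+ →₀ ℂ

/-- The thin Lie algebra bracket on basis elements:
`[e 1, e n] = e (n+1)` for `n ≥ 2`, all other brackets of basis elements zero. -/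
noncomputable def thinBasic (i j : ℕ+) : Thin :=
  if i = 1 ∧ 2 ≤ j then Finsupp.single (j + 1) (1 : ℂ)
  else if j = 1 ∧ 2 ≤ i then -Finsupp.single (i + 1) (1 : ℂ)
  else 0

/-- The thin Lie algebra bracket, extended bilinearly from basis elements. -/
noncomputable def thinBracket (f g : Thin) : Thin :=
  f.sum fun p c => g.sum fun q d => (c * d) • thinBasic p q

/-- The basis element `e i` of the thin Lie algebra. -/
noncomputable def te (i : ℕ+) : Thin := Finsupp.single i 1

lemma brk_add_right (f g h : Thin) :
    thinBracket f (g + h) = thinBracket f g + thinBracket f h := by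
  unfold thinBracket
  rw [← Finsupp.sum_add]
  apply Finsupp.sum_congr
  intro p _
  exact Finsupp.sum_add_index' (fun q => by simp) (fun q d1 d2 => by rw [mul_add, add_smul])

lemma brk_smul_right (a : ℂ) (f g : Thin) :
    thinBracket f (a • g) = a • thinBracket f g := by
  unfold thinBracket
  rw [Finsupp.smul_sum]
  apply Finsupp.sum_congr
  intro p _
  rw [Finsupp.sum_smul_index' (fun q => by simp), Finsupp.smul_sum]
  apply Finsupp.sum_congr
  intro q _
  rw [smul_eq_mul, mul_left_comm, mul_smul]

lemma brk_te_right (f : Thin) (n : ℕ+) (hn : 2 ≤ n) :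
    thinBracket f (te n) = (f 1) • te (n + 1) := by
  have hn1 : ¬ (n = 1) := by
    intro h; rw [h] at hn; exact absurd hn (by decide)
  have hthin : ∀ p : ℕ+, thinBasic p n = if p = 1 then te (n+1) else 0 := by
    intro p
    unfold thinBasic te
    by_cases hp : p = 1 <;> simp [hp, hn, hn1]
  calc thinBracket f (te n)
      = f.sum (fun p c => (c * 1) • thinBasic p n) := by
        unfold thinBracket te
        apply Finsupp.sum_congr ; intro p _
        exact Finsupp.sum_single_index (by simp)
    _ = f.sum (fun p c => if p = 1 then c • te (n+1) else 0) := by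
        apply Finsupp.sum_congr; intro p _
        rw [hthin p]; split <;> simp
    _ = f 1 • te (n+1) := by
        rw [Finsupp.sum_ite_eq' f 1 (fun p c => c • te (n+1))]
        split
        · rfl
        · rw [Finsupp.notMem_support_iff.mp (by assumption), zero_smul]

/-- If `φ` is a 1/2-derivation of the thin Lie algebra and
`φ (e 1) = Σ_i α_i e i`, then for all `n ≥ 2`,
`φ (e n) = (1 - 2^{2-n}) α_1 e n + 2^{2-n} (ad e_1)^{n-2} (φ (e 2))`. -/
theorem thin_half_derivation_formula
    (φ : Thin →ₗ[ℂ] Thin)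
    (hφ : ∀ x y : Thin, φ (thinBracket x y) =
        (1 / 2 : ℂ) • (thinBracket (φ x) y + thinBracket x (φ y))) :
    ∀ n : ℕ+, 2 ≤ n →
      φ (te n) = ((1 - (2 : ℂ) ^ ((2 : ℤ) - ((n : ℕ) : ℤ))) * ((φ (te 1)) 1)) • te n +
        (2 : ℂ) ^ ((2 : ℤ) - ((n : ℕ) : ℤ)) •
          (fun x => thinBracket (te 1) x)^[(n : ℕ) - 2] (φ (te 2)) := by
  have key : ∀ m : ℕ, ∀ n : ℕ+, (n : ℕ) = m + 2 →
      φ (te n) = ((1 - (2 : ℂ) ^ ((2 : ℤ) - ((n : ℕ) : ℤ))) * ((φ (te 1)) 1)) • te n +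
        (2 : ℂ) ^ ((2 : ℤ) - ((n : ℕ) : ℤ)) •
          (fun x => thinBracket (te 1) x)^[(n : ℕ) - 2] (φ (te 2)) := by
    intro m
    induction m with
    | zero =>
        intro n hn
        have : n = 2 := by
          apply PNat.coe_injective; rw [hn]; rfl
        subst this
        norm_num
    | succ m ih =>
        intro n hn
        obtain ⟨n₀, hcoe⟩ : ∃ n₀ : ℕ+, (n₀ : ℕ) = m + 2 := ⟨⟨m + 2, by omega⟩, rfl⟩
        have hn₀2 : 2 ≤ n₀ := by
          rw [← PNat.coe_le_coe, hcoe]; norm_num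
        have hnn : n = n₀ + 1 := by
          apply PNat.coe_injective
          rw [hn, PNat.add_coe, hcoe]; rfl
        subst hnn
        have hrec := hφ (te 1) (te n₀)
        have hbr : thinBracket (te 1) (te n₀) = te (n₀ + 1) := by
          rw [brk_te_right (te 1) n₀ hn₀2]
          simp [te]
        have hbr2 : thinBracket (φ (te 1)) (te n₀) = ((φ (te 1)) 1) • te (n₀ + 1) :=
          brk_te_right _ n₀ hn₀2
        rw [hbr, hbr2, ih n₀ hcoe, brk_add_right, brk_smul_right, brk_smul_right, hbr] at hrec
        rw [hcoe, show m + 2 - 2 = m from rfl,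
          ← Function.iterate_succ_apply' (fun x => thinBracket (te 1) x) m] at hrec
        simp only [Nat.succ_eq_add_one] at hrec
        rw [hrec]
        have hco : ((n₀ + 1 : ℕ+) : ℕ) = m + 3 := by simp [PNat.add_coe, hcoe]
        rw [hco]
        have hexp : (2:ℂ) ^ ((2:ℤ) - ((m + 3 : ℕ) : ℤ)) =
            (2:ℂ) ^ ((2:ℤ) - ((m + 2 : ℕ) : ℤ)) / 2 := by
          have h2 : (2:ℂ) ≠ 0 := two_ne_zero
          rw [show (2:ℤ) - ((m + 3 : ℕ):ℤ) = ((2:ℤ) - ((m + 2 : ℕ):ℤ)) - 1 by push_cast; ring,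
            zpow_sub_one₀ h2]
          ring
        rw [hexp]
        have h32 : m + 3 - 2 = m + 1 := by omega
        rw [h32]
        module
  intro n hn
  have h2 : (2 : ℕ) ≤ (n : ℕ) := by exact_mod_cast hn
  obtain ⟨m, hm⟩ : ∃ m : ℕ, (n : ℕ) = m + 2 := ⟨(n : ℕ) - 2, by omega⟩
  exact key m n hm
end
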